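/- arXiv:2006.05773 — 2 statements merged into one kernel-verified Lean document; each statement's English description precedes it below -/
import Mathlib

section
/- Let F ∈ C⁰(T⁵) and let φ ∈ C²(T⁵) solve equation (★). Let x₀ ∈ K = [−1/2,1/2]⁵ be a point where φ attains its minimum over K, set ε₀ = 1/48 and u(x) = φ(x) − max_K φ + 4ε₀|x−x₀|². Let Γ_{ε₀} = { x ∈ B_{1/2}(x₀) : u(y) ≥ u(x) + ∇u(x)·(y−x) for all y ∈ B_{1/2}(x₀), and |∇u(x)| < ε₀/2 }. Then the Lebesgue measure of Γ_{ε₀} satisfies meas(Γ_{ε₀}) ≥ |B_{1/2}(0)| · (e^{−max_K F}/96)⁵, where |B_{1/2}(0)| is the Lebesgue measure of the ball of radius 1/2 in ℝ⁵. -/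
open MeasureTheory

/-- Partial derivative in the `i`-th coordinate direction. -/
noncomputable def pd {n : ℕ} (i : Fin n) (f : (Fin n → ℝ) → ℝ) : (Fin n → ℝ) → ℝ :=
  fun x => fderiv ℝ f x (Pi.single i 1)

/-- Second partial derivative `∂²f/∂x^i∂x^j`. -/
noncomputable def pd2 {n : ℕ} (i j : Fin n) (f : (Fin n → ℝ) → ℝ) : (Fin n → ℝ) → ℝ :=
  pd i (pd j f)

/-- A function on `ℝⁿ` that is `1`-periodic in every coordinate, i.e. a function on `Tⁿ`. -/
def PeriodicPi {n : ℕ} (f : (Fin n → ℝ) → ℝ) : Prop :=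
  ∀ x : Fin n → ℝ, ∀ i : Fin n, f (x + Pi.single i 1) = f x

/-- The Euclidean Laplacian. -/
noncomputable def lap {n : ℕ} (f : (Fin n → ℝ) → ℝ) : (Fin n → ℝ) → ℝ :=
  fun x => ∑ i, pd2 i i f x

/-- Equation (★): the reduction of the quaternionic Monge–Ampère equation to `T⁵`. -/
def EqStar (F φ : (Fin 5 → ℝ) → ℝ) : Prop :=
  ∀ x : Fin 5 → ℝ,
    (pd2 0 0 φ x + pd2 1 1 φ x + pd2 2 2 φ x + pd2 3 3 φ x + 1) * (pd2 4 4 φ x + 1)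
      - (pd2 0 4 φ x) ^ 2 - (pd2 1 4 φ x) ^ 2 - (pd2 2 4 φ x) ^ 2 - (pd2 3 4 φ x) ^ 2
      = Real.exp (F x)

/-- The Euclidean norm of a vector in `ℝⁿ`. -/
noncomputable def eucNorm {n : ℕ} (v : Fin n → ℝ) : ℝ :=
  Real.sqrt (∑ i, (v i) ^ 2)

/-- The fundamental cube `K = [−1/2, 1/2]⁵`. -/
def Kcube : Set (Fin 5 → ℝ) :=
  Set.Icc (fun _ => -(1/2)) (fun _ => 1/2)

/-- The function `u(x) = φ(x) − max_K φ + 4ε₀|x − x₀|²` with `ε₀ = 1/48`. -/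
noncomputable def uAux (φ : (Fin 5 → ℝ) → ℝ) (x₀ : Fin 5 → ℝ) : (Fin 5 → ℝ) → ℝ :=
  fun x => φ x - sSup (φ '' Kcube) + 4 * (1/48) * ∑ i, (x i - x₀ i) ^ 2

/-- The set `Γ_{ε₀}` of points of the ball `B_{1/2}(x₀)` where `u` admits a supporting
hyperplane (on that ball) and the gradient of `u` is smaller than `ε₀/2`, with `ε₀ = 1/48`. -/
noncomputable def GammaSet (φ : (Fin 5 → ℝ) → ℝ) (x₀ : Fin 5 → ℝ) : Set (Fin 5 → ℝ) :=
  {x | eucNorm (x - x₀) < 1/2 ∧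
    (∀ y : Fin 5 → ℝ, eucNorm (y - x₀) < 1/2 →
      uAux φ x₀ x + ∑ i, pd i (uAux φ x₀) x * (y i - x i) ≤ uAux φ x₀ y) ∧
    eucNorm (fun i => pd i (uAux φ x₀) x) < (1/48) / 2}

/-!
This is the Alexandrov–Bakelman–Pucci argument. By periodicity, `x₀` is a global minimum of `φ`
and `F ≤ max_K F` everywhere, so `u` grows by at least `ε₀` from its value at the centre
`x₀` to the sphere `|x - x₀| = 1/2`. Hence for every `p` with `|p| < ε₀/2` the minimum of
`u(y) - p·y` over the closed ball is attained inside, at a point of `Γ_{ε₀}` with `∇u = p`: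
the gradient map sends `Γ_{ε₀}` onto the ball `B_{ε₀/2}(0)`. On `Γ_{ε₀}` the Hessian `D²u` is
positive semidefinite, and equation (★) together with the `2 × 2` minors `h_{i5}² ≤ h_{ii} h_{55}`
bounds its trace by `3 e^F`; by AM–GM, `det D²u ≤ (3 e^{max F} / 5)⁵`. The area formula for
`∇u` on `Γ_{ε₀}` then gives the bound.
-/

open Matrix Filter Topology Pointwise

section EucNorm
variable {n : ℕ}

lemma eucNorm_eq_norm (v : Fin n → ℝ) : eucNorm v = ‖WithLp.toLp 2 v‖ := by
  simp [eucNorm, EuclideanSpace.norm_eq]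

lemma continuous_eucNorm : Continuous (eucNorm (n := n)) := by
  simp_rw [funext eucNorm_eq_norm]
  exact (PiLp.continuous_toLp 2 _).norm

lemma isOpen_eucNorm_sub_lt (x₀ : Fin n → ℝ) (r : ℝ) : IsOpen {y | eucNorm (y - x₀) < r} :=
  isOpen_lt (continuous_eucNorm.comp (continuous_id.sub continuous_const)) continuous_const

lemma isCompact_eucNorm_sub_le (x₀ : Fin n → ℝ) (r : ℝ) :
    IsCompact {y | eucNorm (y - x₀) ≤ r} := by
  have : {y | eucNorm (y - x₀) ≤ r} =
      (EuclideanSpace.equiv (Fin n) ℝ).symm ⁻¹' Metric.closedBall (WithLp.toLp 2 x₀) r := by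
    ext y
    simp [eucNorm_eq_norm, dist_eq_norm]
  rw [this]
  exact (EuclideanSpace.equiv (Fin n) ℝ).symm.toHomeomorph.isCompact_preimage.2
    (isCompact_closedBall _ _)

lemma dotProduct_le_eucNorm_mul (p w : Fin n → ℝ) : p ⬝ᵥ w ≤ eucNorm p * eucNorm w := by
  simpa [eucNorm_eq_norm, EuclideanSpace.inner_eq_star_dotProduct, dotProduct_comm]
    using real_inner_le_norm (WithLp.toLp 2 p) (WithLp.toLp 2 w)

lemma eucNorm_smul {c : ℝ} (hc : 0 ≤ c) (v : Fin n → ℝ) : eucNorm (c • v) = c * eucNorm v := by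
  rw [eucNorm_eq_norm, eucNorm_eq_norm, WithLp.toLp_smul, norm_smul, Real.norm_of_nonneg hc]

lemma volume_eucNorm_lt_smul {c : ℝ} (hc : 0 < c) (r : ℝ) :
    volume {v : Fin n → ℝ | eucNorm v < c * r} =
      ENNReal.ofReal (c ^ n) * volume {v : Fin n → ℝ | eucNorm v < r} := by
  have : {v : Fin n → ℝ | eucNorm v < c * r} = c • {v | eucNorm v < r} := by
    ext v
    rw [Set.mem_smul_set_iff_inv_smul_mem₀ hc.ne', Set.mem_ofPred_eq, Set.mem_ofPred_eq,
      eucNorm_smul (inv_nonneg.2 hc.le), inv_mul_lt_iff₀ hc]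
  rw [this, Measure.addHaar_smul, Module.finrank_fin_fun, abs_of_nonneg (by positivity)]

end EucNorm

section Periodic
variable {n : ℕ}

def addPeriods (f : (Fin n → ℝ) → ℝ) : AddSubgroup (Fin n → ℝ) where
  carrier := {v | ∀ x, f (x + v) = f x}
  zero_mem' := by simp
  add_mem' {v w} hv hw x := by rw [← add_assoc, hw, hv]
  neg_mem' {v} hv x := by simpa [sub_eq_add_neg] using (hv (x - v)).symm

lemma PeriodicPi.intCast_mem_addPeriods {f : (Fin n → ℝ) → ℝ} (hf : PeriodicPi f)
    (m : Fin n → ℤ) : (fun i => (m i : ℝ)) ∈ addPeriods f := by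
  rw [← Finset.univ_sum_single fun i => (m i : ℝ)]
  refine AddSubgroup.sum_mem _ fun i _ => ?_
  have h1 : Pi.single i (1 : ℝ) ∈ addPeriods f := fun x => hf x i
  simpa [← Pi.single_smul] using zsmul_mem h1 (m i)

lemma exists_mem_Icc_forall_periodicPi_eq (x : Fin n → ℝ) :
    ∃ y ∈ Set.Icc (fun _ => -(1/2 : ℝ)) (fun _ => 1/2), ∀ f, PeriodicPi f → f x = f y := by
  refine ⟨x - fun i => (round (x i) : ℝ), ⟨fun i => ?_, fun i => ?_⟩, fun f hf => ?_⟩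
  · exact (abs_le.1 (abs_sub_round (x i))).1
  · exact (abs_le.1 (abs_sub_round (x i))).2
  · simpa using hf.intCast_mem_addPeriods (fun i => round (x i)) (x - fun i => (round (x i) : ℝ))

lemma PeriodicPi.le_of_forall_mem_Icc_le {f : (Fin n → ℝ) → ℝ} (hf : PeriodicPi f) {a : ℝ}
    (h : ∀ y ∈ Set.Icc (fun _ => -(1/2 : ℝ)) (fun _ => 1/2), a ≤ f y) (x : Fin n → ℝ) :
    a ≤ f x := by
  obtain ⟨y, hy, hxy⟩ := exists_mem_Icc_forall_periodicPi_eq x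
  exact hxy f hf ▸ h y hy

lemma PeriodicPi.le_sSup_image_Icc {f : (Fin n → ℝ) → ℝ} (hf : PeriodicPi f)
    (hc : Continuous f) (x : Fin n → ℝ) :
    f x ≤ sSup (f '' Set.Icc (fun _ => -(1/2 : ℝ)) (fun _ => 1/2)) := by
  obtain ⟨y, hy, hxy⟩ := exists_mem_Icc_forall_periodicPi_eq x
  exact hxy f hf ▸ le_csSup (isCompact_Icc.image hc).bddAbove ⟨y, hy, rfl⟩

end Periodic

section LinearAlgebra
variable {n : ℕ}

lemma ContinuousLinearMap.apply_eq_sum_smul_single {M : Type*} [AddCommGroup M] [Module ℝ M]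
    [TopologicalSpace M] (L : (Fin n → ℝ) →L[ℝ] M) (v : Fin n → ℝ) :
    L v = ∑ i, v i • L (Pi.single i 1) := by
  conv_lhs => rw [← Finset.univ_sum_single v]
  simp [map_sum, ← map_smul, ← Pi.single_smul]

lemma ContinuousLinearMap.apply_apply_eq_dotProduct_mulVec
    (B : (Fin n → ℝ) →L[ℝ] (Fin n → ℝ) →L[ℝ] ℝ) (v w : Fin n → ℝ) :
    B v w = v ⬝ᵥ (Matrix.of (fun i j => B (Pi.single i 1) (Pi.single j 1)) *ᵥ w) := by
  rw [B.apply_eq_sum_smul_single v, _root_.sum_apply]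
  simp [dotProduct, Matrix.mulVec, (B _).apply_eq_sum_smul_single w, Finset.mul_sum, mul_comm]

lemma Real.prod_le_mean_pow {ι : Type*} [Fintype ι] {z : ι → ℝ} (hz : ∀ i, 0 ≤ z i) :
    ∏ i, z i ≤ ((∑ i, z i) / Fintype.card ι) ^ Fintype.card ι := by
  rcases isEmpty_or_nonempty ι with hι | hι
  · simp
  have hcard : (0 : ℝ) < Fintype.card ι := Nat.cast_pos.2 Fintype.card_pos
  have h := Real.geom_mean_le_arith_mean Finset.univ (fun _ => 1) z (fun _ _ => zero_le_one)
    (by simpa using hcard) (fun i _ => hz i)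
  simp only [Real.rpow_one, Finset.sum_const, Finset.card_univ, nsmul_eq_mul, mul_one,
    one_mul] at h
  have hprod : 0 ≤ ∏ i, z i := Finset.prod_nonneg fun i _ => hz i
  calc ∏ i, z i = ((∏ i, z i) ^ ((Fintype.card ι : ℝ)⁻¹)) ^ Fintype.card ι := by
        rw [← Real.rpow_natCast, ← Real.rpow_mul hprod, inv_mul_cancel₀ hcard.ne', Real.rpow_one]
    _ ≤ _ := pow_le_pow_left₀ (by positivity) h _

lemma Matrix.PosSemidef.det_le_trace_div_pow {ι : Type*} [Fintype ι] [DecidableEq ι]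
    {A : Matrix ι ι ℝ} (hA : A.PosSemidef) :
    A.det ≤ (A.trace / Fintype.card ι) ^ Fintype.card ι := by
  rw [hA.isHermitian.det_eq_prod_eigenvalues, hA.isHermitian.trace_eq_sum_eigenvalues]
  simpa using Real.prod_le_mean_pow hA.eigenvalues_nonneg

lemma Matrix.PosSemidef.sq_le_mul_diag {ι : Type*} {A : Matrix ι ι ℝ} (hA : A.PosSemidef)
    (i j : ι) : A i j ^ 2 ≤ A i i * A j j := by
  have h := (hA.submatrix ![i, j]).det_nonneg
  have hij : A j i = A i j := by simpa using hA.isHermitian.apply i j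
  rw [Matrix.det_fin_two] at h
  simp only [Matrix.submatrix_apply, Matrix.cons_val_zero, Matrix.cons_val_one, hij] at h
  nlinarith

end LinearAlgebra

section Calculus
variable {n : ℕ}

noncomputable def grad (u : (Fin n → ℝ) → ℝ) (x : Fin n → ℝ) : Fin n → ℝ := fun i => pd i u x

noncomputable def hessian (u : (Fin n → ℝ) → ℝ) (x : Fin n → ℝ) : Matrix (Fin n) (Fin n) ℝ :=
  Matrix.of fun i j => pd2 i j u x

lemma fderiv_apply_eq_grad_dotProduct (u : (Fin n → ℝ) → ℝ) (x w : Fin n → ℝ) :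
    fderiv ℝ u x w = grad u x ⬝ᵥ w := by
  simp [(fderiv ℝ u x).apply_eq_sum_smul_single w, dotProduct, grad, pd, mul_comm]

lemma continuous_grad {u : (Fin n → ℝ) → ℝ} (hu : ContDiff ℝ 1 u) : Continuous (grad u) :=
  continuous_pi fun i => (ContinuousLinearMap.apply ℝ ℝ (Pi.single i 1)).continuous.comp
    (hu.continuous_fderiv one_ne_zero)

lemma hasFDerivAt_pd {u : (Fin n → ℝ) → ℝ} (hu : ContDiff ℝ 2 u) (j : Fin n) (x : Fin n → ℝ) :
    HasFDerivAt (pd j u)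
      ((ContinuousLinearMap.apply ℝ ℝ (Pi.single j 1)).comp (fderiv ℝ (fderiv ℝ u) x)) x := by
  exact (ContinuousLinearMap.apply ℝ ℝ (Pi.single j 1)).hasFDerivAt.comp x
    ((hu.fderiv_right (m := 1) le_rfl).differentiable one_ne_zero x).hasFDerivAt

lemma hasFDerivAt_grad {u : (Fin n → ℝ) → ℝ} (hu : ContDiff ℝ 2 u) (x : Fin n → ℝ) :
    HasFDerivAt (grad u) (ContinuousLinearMap.pi fun j =>
      (ContinuousLinearMap.apply ℝ ℝ (Pi.single j 1)).comp (fderiv ℝ (fderiv ℝ u) x)) x :=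
  hasFDerivAt_pi'.2 fun j => hasFDerivAt_pd hu j x

lemma pd2_eq_fderiv_fderiv {u : (Fin n → ℝ) → ℝ} (hu : ContDiff ℝ 2 u) (i j : Fin n)
    (x : Fin n → ℝ) : pd2 i j u x = fderiv ℝ (fderiv ℝ u) x (Pi.single i 1) (Pi.single j 1) := by
  rw [pd2, pd, (hasFDerivAt_pd hu j x).fderiv]
  rfl

lemma pd2_comm {u : (Fin n → ℝ) → ℝ} (hu : ContDiff ℝ 2 u) (i j : Fin n) (x : Fin n → ℝ) :
    pd2 i j u x = pd2 j i u x := by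
  rw [pd2_eq_fderiv_fderiv hu, pd2_eq_fderiv_fderiv hu]
  exact (hu.contDiffAt.isSymmSndFDerivAt (by simp)) _ _

lemma hessian_isHermitian {u : (Fin n → ℝ) → ℝ} (hu : ContDiff ℝ 2 u) (x : Fin n → ℝ) :
    (hessian u x).IsHermitian :=
  Matrix.IsHermitian.ext fun i j => by
    simpa only [hessian, of_apply, star_trivial] using pd2_comm hu j i x

lemma dotProduct_hessian_mulVec {u : (Fin n → ℝ) → ℝ} (hu : ContDiff ℝ 2 u) (x v : Fin n → ℝ) :
    v ⬝ᵥ (hessian u x *ᵥ v) = fderiv ℝ (fderiv ℝ u) x v v := by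
  rw [(fderiv ℝ (fderiv ℝ u) x).apply_apply_eq_dotProduct_mulVec]
  congr
  ext i j
  exact pd2_eq_fderiv_fderiv hu i j x

lemma det_fderiv_grad {u : (Fin n → ℝ) → ℝ} (hu : ContDiff ℝ 2 u) (x : Fin n → ℝ) :
    (fderiv ℝ (grad u) x).det = (hessian u x).det := by
  rw [(hasFDerivAt_grad hu x).fderiv, ContinuousLinearMap.det, ← LinearMap.det_toMatrix',
    ← Matrix.det_transpose]
  congr 1
  ext i j
  rw [Matrix.transpose_apply, LinearMap.toMatrix'_apply]
  simp [hessian, pd2_eq_fderiv_fderiv hu]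

-- If `f'' a < 0`, then `a` is also a local maximum, so `f` is locally constant and `f'' a = 0`.
lemma IsLocalMin.deriv_deriv_nonneg {f : ℝ → ℝ} {a : ℝ} (h : IsLocalMin f a)
    (hc : ContinuousAt f a) : 0 ≤ deriv (deriv f) a := by
  by_contra! hneg
  have hmax : IsLocalMax f a := isLocalMax_of_deriv_deriv_neg hneg h.deriv_eq_zero hc
  have hconst : f =ᶠ[𝓝 a] fun _ => f a := (h.and hmax).mono fun _ hx => le_antisymm hx.2 hx.1
  have := hconst.deriv.deriv_eq
  simp_all

lemma IsLocalMin.fderiv_fderiv_apply_self_nonneg {E : Type*} [NormedAddCommGroup E]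
    [NormedSpace ℝ E] {u : E → ℝ} (hu : ContDiff ℝ 2 u) {ℓ : E →L[ℝ] ℝ} {x : E}
    (hmin : IsLocalMin (fun y => u y - ℓ y) x) (v : E) :
    0 ≤ fderiv ℝ (fderiv ℝ u) x v v := by
  have hline : ∀ t : ℝ, HasDerivAt (fun t : ℝ => x + t • v) v t := fun t => by
    simpa using ((hasDerivAt_id t).smul_const v).const_add x
  have hderiv : deriv (fun t : ℝ => u (x + t • v) - ℓ (x + t • v)) =
      fun t => fderiv ℝ u (x + t • v) v - ℓ v := by
    funext t
    exact (((hu.differentiable two_ne_zero _).hasFDerivAt.comp_hasDerivAt t (hline t)).sub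
      (ℓ.hasFDerivAt.comp_hasDerivAt t (hline t))).deriv
  have hderiv2 : HasDerivAt (fun t : ℝ => fderiv ℝ u (x + t • v) v - ℓ v)
      (fderiv ℝ (fderiv ℝ u) x v v) 0 := by
    have hdu := (hu.fderiv_right (m := 1) le_rfl).differentiable one_ne_zero (x + (0 : ℝ) • v)
    simpa using (((ContinuousLinearMap.apply ℝ ℝ v).hasFDerivAt.comp _
      hdu.hasFDerivAt).comp_hasDerivAt (0 : ℝ) (hline 0)).sub_const (ℓ v)
  have hmin' : IsLocalMin (fun t : ℝ => u (x + t • v) - ℓ (x + t • v)) 0 := by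
    refine IsLocalMin.comp_continuous (f := fun y => u y - ℓ y) ?_ (by fun_prop)
    simpa using hmin
  have := hmin'.deriv_deriv_nonneg (by have := hu.continuous; fun_prop)
  rwa [hderiv, hderiv2.deriv] at this

end Calculus

lemma MeasureTheory.Measure.addHaar_image_le_mul_of_abs_det_le {E : Type*}
    [NormedAddCommGroup E] [NormedSpace ℝ E] [FiniteDimensional ℝ E] [MeasurableSpace E]
    [BorelSpace E] (μ : Measure E) [μ.IsAddHaarMeasure] {f : E → E} {f' : E → E →L[ℝ] E}
    {s : Set E} (hs : MeasurableSet s) (hf' : ∀ x ∈ s, HasFDerivWithinAt f (f' x) s x) {D : ℝ}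
    (hD : ∀ x ∈ s, |(f' x).det| ≤ D) : μ (f '' s) ≤ ENNReal.ofReal D * μ s :=
  calc μ (f '' s) ≤ ∫⁻ x in s, ENNReal.ofReal |(f' x).det| ∂μ :=
        addHaar_image_le_lintegral_abs_det_fderiv μ hs hf'
    _ ≤ ∫⁻ _ in s, ENNReal.ofReal D ∂μ :=
        setLIntegral_mono measurable_const fun x hx => ENNReal.ofReal_le_ofReal (hD x hx)
    _ = ENNReal.ofReal D * μ s := setLIntegral_const _ _

section Contact
variable {n : ℕ}

/-- `GammaSet φ x₀` is `contactSet (uAux φ x₀) x₀ (1/2) ((1/48)/2)` by definition. -/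
def contactSet (u : (Fin n → ℝ) → ℝ) (x₀ : Fin n → ℝ) (r ρ : ℝ) : Set (Fin n → ℝ) :=
  {x | eucNorm (x - x₀) < r ∧
    (∀ y, eucNorm (y - x₀) < r → u x + ∑ i, pd i u x * (y i - x i) ≤ u y) ∧
    eucNorm (grad u x) < ρ}

lemma measurableSet_contactSet {u : (Fin n → ℝ) → ℝ} (hu : ContDiff ℝ 1 u) (x₀ : Fin n → ℝ)
    (r ρ : ℝ) : MeasurableSet (contactSet u x₀ r ρ) := by
  have hgrad := continuous_grad hu
  have hpd : ∀ i, Continuous (pd i u) := fun i => (continuous_apply i).comp hgrad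
  have hu' := hu.continuous
  have hsupp : IsClosed
      {x | ∀ y, eucNorm (y - x₀) < r → u x + ∑ i, pd i u x * (y i - x i) ≤ u y} := by
    simp only [Set.ofPred_forall]
    exact isClosed_iInter fun y => isClosed_iInter fun _ =>
      isClosed_le (by fun_prop) continuous_const
  exact (isOpen_eucNorm_sub_lt x₀ r).measurableSet.inter (hsupp.measurableSet.inter
    (isOpen_lt (continuous_eucNorm.comp hgrad) continuous_const).measurableSet)

lemma isLocalMin_sub_fderiv_of_mem_contactSet {u : (Fin n → ℝ) → ℝ} {x₀ x : Fin n → ℝ}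
    {r ρ : ℝ} (hx : x ∈ contactSet u x₀ r ρ) : IsLocalMin (fun y => u y - fderiv ℝ u x y) x := by
  filter_upwards [(isOpen_eucNorm_sub_lt x₀ r).mem_nhds hx.1] with y hy
  have hsupp : u x + grad u x ⬝ᵥ (y - x) ≤ u y := hx.2.1 y hy
  rw [← fderiv_apply_eq_grad_dotProduct, map_sub] at hsupp
  linarith

lemma posSemidef_hessian_of_mem_contactSet {u : (Fin n → ℝ) → ℝ} (hu : ContDiff ℝ 2 u)
    {x₀ x : Fin n → ℝ} {r ρ : ℝ} (hx : x ∈ contactSet u x₀ r ρ) : (hessian u x).PosSemidef :=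
  .of_dotProduct_mulVec_nonneg (hessian_isHermitian hu x) fun v => by
    rw [star_trivial, dotProduct_hessian_mulVec hu]
    exact (isLocalMin_sub_fderiv_of_mem_contactSet hx).fderiv_fderiv_apply_self_nonneg hu v

-- A minimiser `z` of `u y - p ⬝ᵥ y` on the closed ball cannot lie on the sphere, because
-- `u` grows by `r * ρ` there while `p ⬝ᵥ (z - x₀) < r * ρ`.
lemma grad_image_contactSet_superset {u : (Fin n → ℝ) → ℝ} (hu : Differentiable ℝ u)
    {x₀ : Fin n → ℝ} {r ρ : ℝ} (hr : 0 < r)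
    (hgrowth : ∀ y, eucNorm (y - x₀) = r → u x₀ + r * ρ ≤ u y) :
    {p | eucNorm p < ρ} ⊆ grad u '' contactSet u x₀ r ρ := by
  intro p hp
  set ℓ : (Fin n → ℝ) →L[ℝ] ℝ := LinearMap.toContinuousLinearMap (dotProductBilin ℝ ℝ p)
  have hℓ : ∀ y, ℓ y = p ⬝ᵥ y := fun y => rfl
  set C := {y | eucNorm (y - x₀) ≤ r}
  have hx₀C : x₀ ∈ C := by simp [C, eucNorm, hr.le]
  obtain ⟨z, hzC, hzmin⟩ := (isCompact_eucNorm_sub_le x₀ r).exists_isMinOn ⟨x₀, hx₀C⟩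
    (hu.continuous.sub ℓ.continuous).continuousOn
  have hzr : eucNorm (z - x₀) < r := by
    refine lt_of_le_of_ne hzC fun hz => ?_
    have hzu := hgrowth z hz
    have hzx₀ : u z - ℓ z ≤ u x₀ - ℓ x₀ := hzmin hx₀C
    have hpz : p ⬝ᵥ (z - x₀) < r * ρ := by
      calc p ⬝ᵥ (z - x₀) ≤ eucNorm p * eucNorm (z - x₀) := dotProduct_le_eucNorm_mul _ _
        _ < ρ * r := by rw [hz]; exact mul_lt_mul_of_pos_right hp hr
        _ = r * ρ := mul_comm _ _
    rw [hℓ, hℓ] at hzx₀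
    rw [dotProduct_sub] at hpz
    linarith
  have hloc : IsLocalMin (fun y => u y - ℓ y) z :=
    hzmin.isLocalMin (Filter.mem_of_superset ((isOpen_eucNorm_sub_lt x₀ r).mem_nhds hzr)
      fun y (hy : eucNorm (y - x₀) < r) => hy.le)
  have hgrad : grad u z = p := by
    have h := hloc.hasFDerivAt_eq_zero ((hu z).hasFDerivAt.sub ℓ.hasFDerivAt)
    funext i
    simpa [grad, pd, hℓ, sub_eq_zero] using congrArg (· (Pi.single i 1)) h
  refine ⟨z, ⟨hzr, fun y hy => ?_, hgrad ▸ hp⟩, hgrad⟩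
  have hzy : u z - ℓ z ≤ u y - ℓ y := hzmin (show y ∈ C from hy.le)
  rw [hℓ, hℓ] at hzy
  show u z + grad u z ⬝ᵥ (y - z) ≤ u y
  rw [hgrad, dotProduct_sub]
  linarith

lemma volume_eucNorm_lt_le_mul_volume_contactSet {u : (Fin n → ℝ) → ℝ}
    (hu : ContDiff ℝ 2 u) {x₀ : Fin n → ℝ} {r ρ : ℝ} (hr : 0 < r)
    (hgrowth : ∀ y, eucNorm (y - x₀) = r → u x₀ + r * ρ ≤ u y) {D : ℝ}
    (hD : ∀ x ∈ contactSet u x₀ r ρ, (hessian u x).det ≤ D) :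
    volume {p : Fin n → ℝ | eucNorm p < ρ} ≤
      ENNReal.ofReal D * volume (contactSet u x₀ r ρ) := by
  refine (measure_mono (grad_image_contactSet_superset (hu.differentiable two_ne_zero) hr
    hgrowth)).trans (volume.addHaar_image_le_mul_of_abs_det_le
      (measurableSet_contactSet (hu.of_le one_le_two) x₀ r ρ)
      (fun x _ => (hasFDerivAt_grad hu x).differentiableAt.hasFDerivAt.hasFDerivWithinAt)
      fun x hx => ?_)
  rw [det_fderiv_grad hu, abs_of_nonneg (posSemidef_hessian_of_mem_contactSet hu hx).det_nonneg]
  exact hD x hx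

end Contact

lemma pd_sum_sq_sub {n : ℕ} (x₀ : Fin n → ℝ) (j : Fin n) (y : Fin n → ℝ) :
    pd j (fun x => ∑ i, (x i - x₀ i) ^ 2) y = 2 * (y j - x₀ j) := by
  have h : ∀ i, HasFDerivAt (fun x : Fin n → ℝ => (x i - x₀ i) ^ 2)
      ((2 * (y i - x₀ i)) • ContinuousLinearMap.proj i) y := fun i => by
    simpa [mul_comm] using ((hasFDerivAt_apply (𝕜 := ℝ) i y).sub_const (x₀ i)).pow 2
  rw [pd, (HasFDerivAt.fun_sum fun i _ => h i).fderiv]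
  simp [Pi.single_apply]

section UAux
variable (φ : (Fin 5 → ℝ) → ℝ) (x₀ : Fin 5 → ℝ)

lemma contDiff_uAux (hφ : ContDiff ℝ 2 φ) : ContDiff ℝ 2 (uAux φ x₀) := by
  unfold uAux
  fun_prop

lemma pd_uAux (hφ : Differentiable ℝ φ) (j : Fin 5) :
    pd j (uAux φ x₀) = fun y => pd j φ y + 1/6 * (y j - x₀ j) := by
  funext y
  unfold uAux
  rw [pd, fderiv_fun_add (by fun_prop) (by fun_prop), fderiv_sub_const,
    fderiv_const_mul (by fun_prop)]
  simp only [_root_.add_apply, _root_.smul_apply, smul_eq_mul]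
  rw [← pd, ← pd, pd_sum_sq_sub]
  ring

lemma pd2_uAux (hφ : ContDiff ℝ 2 φ) (i j : Fin 5) (x : Fin 5 → ℝ) :
    pd2 i j (uAux φ x₀) x = pd2 i j φ x + if i = j then 1/6 else 0 := by
  rw [pd2, pd_uAux φ x₀ (hφ.differentiable two_ne_zero), pd,
    fderiv_fun_add (hasFDerivAt_pd hφ j x).differentiableAt (by fun_prop),
    fderiv_const_mul (by fun_prop), fderiv_sub_const]
  simp [pd2, pd, (hasFDerivAt_apply j x).fderiv, Pi.single_apply, eq_comm]

variable {φ x₀}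

lemma uAux_add_le_of_eucNorm_eq (hmin : ∀ x, φ x₀ ≤ φ x) (y : Fin 5 → ℝ)
    (hy : eucNorm (y - x₀) = 1/2) : uAux φ x₀ x₀ + 1/2 * (1/48/2) ≤ uAux φ x₀ y := by
  have hsq : ∑ i, (y i - x₀ i) ^ 2 = 1/4 := by
    rw [eucNorm, Real.sqrt_eq_iff_mul_self_eq_of_pos (by norm_num)] at hy
    simp only [Pi.sub_apply] at hy
    linarith
  simp only [uAux, sub_self, hsq]
  norm_num
  linarith [hmin y]

-- With `a = ∑_{i<4} h_ii` and `b = h_44`, (★) reads `(a + 1/3)(b + 5/6) - ∑_{i<4} h_i4² = e^F`,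
-- and the minors give `∑_{i<4} h_i4² ≤ a b`, so `5a/6 + b/3 ≤ e^F`.
lemma trace_hessian_uAux_le {F : (Fin 5 → ℝ) → ℝ} (hφ : ContDiff ℝ 2 φ) (heq : EqStar F φ)
    (x : Fin 5 → ℝ) (hH : (hessian (uAux φ x₀) x).PosSemidef) :
    (hessian (uAux φ x₀) x).trace ≤ 3 * Real.exp (F x) := by
  set H := hessian (uAux φ x₀) x
  have hφH : ∀ i j, pd2 i j φ x = H i j - if i = j then 1/6 else 0 := fun i j => by
    simp [H, hessian, pd2_uAux φ x₀ hφ]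
  have hE := heq x
  simp only [hφH, if_pos, if_neg, Fin.reduceEq, not_false_eq_true] at hE
  have hd := fun i => hH.diag_nonneg (i := i)
  rw [Matrix.trace, Fin.sum_univ_five]
  simp only [Matrix.diag_apply]
  nlinarith [hH.sq_le_mul_diag 0 4, hH.sq_le_mul_diag 1 4, hH.sq_le_mul_diag 2 4,
    hH.sq_le_mul_diag 3 4, hd 0, hd 1, hd 2, hd 3, hd 4]

end UAux

lemma ENNReal.mul_ofReal_le_of_ofReal_mul_le {X Y : ENNReal} {a b D : ℝ} (hD : 0 < D)
    (hbD : b * D ≤ a) (h : ENNReal.ofReal a * X ≤ ENNReal.ofReal D * Y) :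
    X * ENNReal.ofReal b ≤ Y := by
  rw [← ENNReal.mul_le_mul_iff_left (ENNReal.ofReal_pos.2 hD).ne' ENNReal.ofReal_ne_top]
  calc X * ENNReal.ofReal b * ENNReal.ofReal D = ENNReal.ofReal (b * D) * X := by
        rw [ENNReal.ofReal_mul' hD.le]
        ring
    _ ≤ ENNReal.ofReal a * X := by gcongr
    _ ≤ ENNReal.ofReal D * Y := h
    _ = Y * ENNReal.ofReal D := mul_comm _ _

theorem measure_Gamma_lower_bound_general
    (F φ : (Fin 5 → ℝ) → ℝ) (hF : Continuous F) (hFper : PeriodicPi F)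
    (hφ : ContDiff ℝ 2 φ) (hφper : PeriodicPi φ) (heq : EqStar F φ)
    (x₀ : Fin 5 → ℝ) (hmin : ∀ y ∈ Kcube, φ x₀ ≤ φ y) :
    volume {v : Fin 5 → ℝ | eucNorm v < 1/2} *
        ENNReal.ofReal ((Real.exp (-sSup (F '' Kcube)) / 96) ^ 5)
      ≤ volume (GammaSet φ x₀) := by
  set M := sSup (F '' Kcube)
  have hφmin : ∀ x, φ x₀ ≤ φ x := PeriodicPi.le_of_forall_mem_Icc_le hφper hmin
  have hFM : ∀ x, F x ≤ M := PeriodicPi.le_sSup_image_Icc hFper hF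
  have hu := contDiff_uAux φ x₀ hφ
  have hdet : ∀ x ∈ GammaSet φ x₀, (hessian (uAux φ x₀) x).det ≤ (3 * Real.exp M / 5) ^ 5 := by
    intro x hx
    have hH := posSemidef_hessian_of_mem_contactSet hu hx
    refine hH.det_le_trace_div_pow.trans ?_
    simp only [Fintype.card_fin, Nat.cast_ofNat]
    refine pow_le_pow_left₀ (div_nonneg hH.trace_nonneg (by norm_num)) ?_ 5
    linarith [trace_hessian_uAux_le hφ heq x hH, Real.exp_le_exp.2 (hFM x)]
  have habp := volume_eucNorm_lt_le_mul_volume_contactSet hu (by norm_num)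
    (uAux_add_le_of_eucNorm_eq hφmin) hdet
  have hball : volume {p : Fin 5 → ℝ | eucNorm p < 1/48/2} =
      ENNReal.ofReal ((1/48) ^ 5) * volume {v : Fin 5 → ℝ | eucNorm v < 1/2} := by
    rw [← volume_eucNorm_lt_smul (by norm_num)]
    norm_num
  rw [hball] at habp
  refine ENNReal.mul_ofReal_le_of_ofReal_mul_le (by positivity) ?_ habp
  rw [← mul_pow, div_mul_div_comm, mul_left_comm, ← Real.exp_add, neg_add_cancel, Real.exp_zero]
  norm_num

/-- Lower bound on the Lebesgue measure of `Γ_{ε₀}`. -/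
theorem measure_Gamma_lower_bound
    (F φ : (Fin 5 → ℝ) → ℝ) (hF : Continuous F) (hFper : PeriodicPi F)
    (hφ : ContDiff ℝ 2 φ) (hφper : PeriodicPi φ) (heq : EqStar F φ)
    (x₀ : Fin 5 → ℝ) (hx₀ : x₀ ∈ Kcube) (hmin : ∀ y ∈ Kcube, φ x₀ ≤ φ y) :
    volume {v : Fin 5 → ℝ | eucNorm v < 1/2} *
        ENNReal.ofReal ((Real.exp (-sSup (F '' Kcube)) / 96) ^ 5)
      ≤ volume (GammaSet φ x₀) :=
  measure_Gamma_lower_bound_general F φ hF hFper hφ hφper heq x₀ hmin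
end

section
/- Let F ∈ C⁰(T⁷) and let φ ∈ C²(T⁷) be a solution of equation (‡). Then at every point of ℝ⁷ and for every nonzero ξ = (ξ₁,…,ξ₇) ∈ ℝ⁷ one has B(ξ₁²+ξ₂²+ξ₃²+ξ₄²) + A(ξ₅²+ξ₆²+ξ₇²) − 2a₁(ξ₄ξ₅ − ξ₁ξ₆ − ξ₂ξ₇) − 2a₂(ξ₃ξ₅ + ξ₁ξ₇ − ξ₂ξ₆) − 2a₃(ξ₃ξ₆ + ξ₄ξ₇ + ξ₂ξ₅) − 2a₄(ξ₄ξ₆ − ξ₃ξ₇ + ξ₁ξ₅) > 0; in particular equation (‡) is elliptic at any solution. -/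
open MeasureTheory

/-- `A = φ₁₁ + φ₂₂ + φ₃₃ + φ₄₄ + 1` on `T⁷`. -/
noncomputable def A7 (φ : (Fin 7 → ℝ) → ℝ) : (Fin 7 → ℝ) → ℝ :=
  fun x => pd2 0 0 φ x + pd2 1 1 φ x + pd2 2 2 φ x + pd2 3 3 φ x + 1

/-- `B = φ₅₅ + φ₆₆ + φ₇₇ + 1` on `T⁷`. -/
noncomputable def B7 (φ : (Fin 7 → ℝ) → ℝ) : (Fin 7 → ℝ) → ℝ :=
  fun x => pd2 4 4 φ x + pd2 5 5 φ x + pd2 6 6 φ x + 1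

/-- `a₁ = φ₄₅ − φ₁₆ − φ₂₇`. -/
noncomputable def a₁7 (φ : (Fin 7 → ℝ) → ℝ) : (Fin 7 → ℝ) → ℝ :=
  fun x => pd2 3 4 φ x - pd2 0 5 φ x - pd2 1 6 φ x

/-- `a₂ = φ₃₅ + φ₁₇ − φ₂₆`. -/
noncomputable def a₂7 (φ : (Fin 7 → ℝ) → ℝ) : (Fin 7 → ℝ) → ℝ :=
  fun x => pd2 2 4 φ x + pd2 0 6 φ x - pd2 1 5 φ x

/-- `a₃ = φ₃₆ + φ₄₇ + φ₂₅`. -/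
noncomputable def a₃7 (φ : (Fin 7 → ℝ) → ℝ) : (Fin 7 → ℝ) → ℝ :=
  fun x => pd2 2 5 φ x + pd2 3 6 φ x + pd2 1 4 φ x

/-- `a₄ = φ₄₆ − φ₃₇ + φ₁₅`. -/
noncomputable def a₄7 (φ : (Fin 7 → ℝ) → ℝ) : (Fin 7 → ℝ) → ℝ :=
  fun x => pd2 3 5 φ x - pd2 2 6 φ x + pd2 0 4 φ x

/-- Equation (‡): the reduction of the quaternionic Monge–Ampère equation on `M₁` to the
base `T⁷` for `S¹`-invariant data. -/
def EqDDagger (F φ : (Fin 7 → ℝ) → ℝ) : Prop :=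
  ∀ x : Fin 7 → ℝ,
    A7 φ x * B7 φ x - (a₁7 φ x) ^ 2 - (a₂7 φ x) ^ 2 - (a₃7 φ x) ^ 2 - (a₄7 φ x) ^ 2
      = Real.exp (F x)

/-!
Since `φ` is periodic it attains a minimum, where its pure second derivatives are nonnegative,
so `A > 0` there. The equation gives `AB = e^F + Σ aₖ² > 0`, so the continuous function `A`
never vanishes; by connectedness it is positive everywhere, and then so is `B`. Writing
`ξ = (u, v) ∈ ℝ⁴ × ℝ³`, the form is `B|u|² + A|v|² - 2⟨u, Mv⟩` for a `4 × 3` matrix `M` whose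
columns are orthogonal of squared length `Σ aₖ²`, so completing the square gives
`B · form = e^F |v|² + |Bu - Mv|²`.
-/

open Set Filter Topology

theorem IsLocalMin.deriv_deriv_nonneg_s15 {g : ℝ → ℝ} {a : ℝ} (hg : Differentiable ℝ g)
    (hmin : IsLocalMin g a) : 0 ≤ deriv (deriv g) a := by
  by_contra! hneg
  have hdecr : ∀ᶠ t in 𝓝[>] a, deriv g t < 0 :=
    deriv_neg_right_of_sign_deriv <| nhdsWithin_le_nhds <|
      eventually_nhdsWithin_sign_eq_of_deriv_neg hneg hmin.deriv_eq_zero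
  obtain ⟨u, hau, hu⟩ := mem_nhdsGT_iff_exists_Ioo_subset.mp
    (hdecr.and (nhdsWithin_le_nhds hmin))
  set b := (a + u) / 2
  have hab : a < b := by simp only [b]; linarith [hau.out]
  have hbu : b < u := by simp only [b]; linarith [hau.out]
  obtain ⟨c, hc, hslope⟩ := exists_deriv_eq_slope g hab hg.continuous.continuousOn
    hg.differentiableOn
  have hslope_nonneg : 0 ≤ (g b - g a) / (b - a) :=
    div_nonneg (sub_nonneg.2 (hu ⟨hab, hbu⟩).2) (sub_nonneg.2 hab.le)
  exact (hu ⟨hc.1, hc.2.trans hbu⟩).1.not_ge (hslope ▸ hslope_nonneg)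

section Directional

variable {E : Type*} [NormedAddCommGroup E] [NormedSpace ℝ E]

theorem hasDerivAt_comp_add_smul {f : E → ℝ} {x v : E} {t : ℝ}
    (hf : DifferentiableAt ℝ f (x + t • v)) :
    HasDerivAt (fun s : ℝ => f (x + s • v)) (fderiv ℝ f (x + t • v) v) t := by
  have hline : HasDerivAt (fun s : ℝ => x + s • v) v t := by
    simpa using ((hasDerivAt_id t).smul_const v).const_add x
  exact hf.hasFDerivAt.comp_hasDerivAt t hline

theorem IsLocalMin.fderiv_fderiv_apply_self_nonneg_s15 {f : E → ℝ} {x v : E}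
    (hf : Differentiable ℝ f) (hf' : DifferentiableAt ℝ (fderiv ℝ f · v) x)
    (hmin : IsLocalMin f x) : 0 ≤ fderiv ℝ (fderiv ℝ f · v) x v := by
  have hderiv : deriv (fun s : ℝ => f (x + s • v)) = fun s => fderiv ℝ f (x + s • v) v :=
    funext fun s => (hasDerivAt_comp_add_smul (hf _)).deriv
  have hderiv2 : deriv (fun s : ℝ => fderiv ℝ f (x + s • v) v) 0 = fderiv ℝ (fderiv ℝ f · v) x v :=
    (hasDerivAt_comp_add_smul (f := (fderiv ℝ f · v)) (by simpa using hf')).deriv.trans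
      (by simp)
  have hline_min : IsLocalMin (fun s : ℝ => f (x + s • v)) 0 :=
    IsLocalMin.comp_continuous (g := fun s : ℝ => x + s • v) (by simpa using hmin)
      (by fun_prop)
  have := hline_min.deriv_deriv_nonneg_s15 fun s => (hasDerivAt_comp_add_smul (hf _)).differentiableAt
  rwa [hderiv, hderiv2] at this

end Directional

theorem contDiff_pd {n : ℕ} {m k : WithTop ℕ∞} {f : (Fin n → ℝ) → ℝ} (hf : ContDiff ℝ k f)
    (hmk : m + 1 ≤ k) (j : Fin n) : ContDiff ℝ m (pd j f) :=
  (hf.fderiv_right hmk).clm_apply contDiff_const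

theorem continuous_pd2 {n : ℕ} {f : (Fin n → ℝ) → ℝ} (hf : ContDiff ℝ 2 f) (i j : Fin n) :
    Continuous (pd2 i j f) :=
  (contDiff_pd (contDiff_pd hf (m := 1) (by norm_num) j) (m := 0) (by norm_num) i).continuous

theorem pd2_self_nonneg_of_isLocalMin {n : ℕ} {f : (Fin n → ℝ) → ℝ} (hf : ContDiff ℝ 2 f)
    {x : Fin n → ℝ} (hmin : IsLocalMin f x) (i : Fin n) : 0 ≤ pd2 i i f x :=
  hmin.fderiv_fderiv_apply_self_nonneg_s15 (hf.differentiable (by norm_num))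
    ((contDiff_pd hf (m := 1) (by norm_num) i).differentiable (by norm_num) x)

theorem PeriodicPi.apply_sub_intCast {n : ℕ} {f : (Fin n → ℝ) → ℝ} (hf : PeriodicPi f)
    (y : Fin n → ℝ) (k : Fin n → ℤ) : f (y - fun i => (k i : ℝ)) = f y := by
  have hperiod : Function.Periodic f (∑ i, k i • Pi.single i (1 : ℝ)) := by
    classical
    induction (Finset.univ : Finset (Fin n)) using Finset.induction with
    | empty => simp [Function.Periodic]
    | insert j s hj ih =>
      rw [Finset.sum_insert hj]
      exact (Function.Periodic.zsmul (fun x => hf x j) (k j)).add_period ih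
  convert hperiod.sub_eq y using 3
  ext i
  simp [Finset.sum_apply, Pi.single_apply]

theorem PeriodicPi.exists_forall_le {n : ℕ} {f : (Fin n → ℝ) → ℝ} (hper : PeriodicPi f)
    (hf : Continuous f) : ∃ x₀, ∀ y, f x₀ ≤ f y := by
  obtain ⟨x₀, -, hmin⟩ := isCompact_Icc.exists_isMinOn
    (nonempty_Icc.2 (zero_le_one : (0 : Fin n → ℝ) ≤ 1)) hf.continuousOn
  refine ⟨x₀, fun y => ?_⟩
  have hfract : y - (fun i => (⌊y i⌋ : ℝ)) ∈ Icc 0 1 :=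
    ⟨fun i => Int.fract_nonneg (y i), fun i => (Int.fract_lt_one (y i)).le⟩
  exact (hmin hfract).trans_eq (hper.apply_sub_intCast y _)

theorem pos_of_forall_ne_zero {X : Type*} [TopologicalSpace X] [PreconnectedSpace X]
    {g : X → ℝ} (hg : Continuous g) (hne : ∀ x, g x ≠ 0) {x₀ : X} (h₀ : 0 < g x₀) (x : X) :
    0 < g x := by
  by_contra! hx
  obtain ⟨y, -, hy⟩ := isPreconnected_univ.intermediate_value (mem_univ x) (mem_univ x₀)
    hg.continuousOn ⟨hx, h₀.le⟩
  exact hne y hy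

theorem sum_sq_pos_of_ne_zero {ι : Type*} [Fintype ι] {ξ : ι → ℝ} (hξ : ξ ≠ 0) :
    0 < ∑ i, ξ i ^ 2 := by
  obtain ⟨i, hi⟩ := Function.ne_iff.mp hξ
  exact Finset.sum_pos' (fun j _ => sq_nonneg (ξ j)) ⟨i, Finset.mem_univ i, sq_pos_of_ne_zero hi⟩

theorem quaternionicForm_pos {A B a₁ a₂ a₃ a₄ : ℝ} (hB : 0 < B)
    (hdet : 0 < A * B - a₁ ^ 2 - a₂ ^ 2 - a₃ ^ 2 - a₄ ^ 2) {ξ : Fin 7 → ℝ} (hξ : ξ ≠ 0) :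
    0 < B * ((ξ 0) ^ 2 + (ξ 1) ^ 2 + (ξ 2) ^ 2 + (ξ 3) ^ 2)
          + A * ((ξ 4) ^ 2 + (ξ 5) ^ 2 + (ξ 6) ^ 2)
          - 2 * a₁ * (ξ 3 * ξ 4 - ξ 0 * ξ 5 - ξ 1 * ξ 6)
          - 2 * a₂ * (ξ 2 * ξ 4 + ξ 0 * ξ 6 - ξ 1 * ξ 5)
          - 2 * a₃ * (ξ 2 * ξ 5 + ξ 3 * ξ 6 + ξ 1 * ξ 4)
          - 2 * a₄ * (ξ 3 * ξ 5 - ξ 2 * ξ 6 + ξ 0 * ξ 4) := by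
  refine pos_of_mul_pos_right ?_ hB.le
  rcases (add_nonneg (add_nonneg (sq_nonneg (ξ 4)) (sq_nonneg (ξ 5))) (sq_nonneg (ξ 6))).lt_or_eq
    with hv | hv
  · have key : B * (B * ((ξ 0) ^ 2 + (ξ 1) ^ 2 + (ξ 2) ^ 2 + (ξ 3) ^ 2)
          + A * ((ξ 4) ^ 2 + (ξ 5) ^ 2 + (ξ 6) ^ 2)
          - 2 * a₁ * (ξ 3 * ξ 4 - ξ 0 * ξ 5 - ξ 1 * ξ 6)
          - 2 * a₂ * (ξ 2 * ξ 4 + ξ 0 * ξ 6 - ξ 1 * ξ 5)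
          - 2 * a₃ * (ξ 2 * ξ 5 + ξ 3 * ξ 6 + ξ 1 * ξ 4)
          - 2 * a₄ * (ξ 3 * ξ 5 - ξ 2 * ξ 6 + ξ 0 * ξ 4))
        = (A * B - a₁ ^ 2 - a₂ ^ 2 - a₃ ^ 2 - a₄ ^ 2) * ((ξ 4) ^ 2 + (ξ 5) ^ 2 + (ξ 6) ^ 2)
          + (B * ξ 0 - (a₄ * ξ 4 - a₁ * ξ 5 + a₂ * ξ 6)) ^ 2
          + (B * ξ 1 - (a₃ * ξ 4 - a₂ * ξ 5 - a₁ * ξ 6)) ^ 2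
          + (B * ξ 2 - (a₂ * ξ 4 + a₃ * ξ 5 - a₄ * ξ 6)) ^ 2
          + (B * ξ 3 - (a₁ * ξ 4 + a₄ * ξ 5 + a₃ * ξ 6)) ^ 2 := by ring
    rw [key]
    have := mul_pos hdet hv
    positivity
  · obtain ⟨⟨h4, h5⟩, h6⟩ : (ξ 4 = 0 ∧ ξ 5 = 0) ∧ ξ 6 = 0 := by
      simpa [add_eq_zero_iff_of_nonneg, add_nonneg, sq_nonneg] using hv.symm
    have hu := sum_sq_pos_of_ne_zero hξ
    rw [Fin.sum_univ_seven, h4, h5, h6] at hu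
    rw [h4, h5, h6]
    linarith [mul_pos (mul_pos hB hB) hu]

theorem continuous_A7 {φ : (Fin 7 → ℝ) → ℝ} (hφ : ContDiff ℝ 2 φ) : Continuous (A7 φ) := by
  have := continuous_pd2 hφ
  unfold A7
  fun_prop

theorem ellipticity_of_eqDDagger_general
    (F φ : (Fin 7 → ℝ) → ℝ)
    (hφ : ContDiff ℝ 2 φ) (hφper : PeriodicPi φ) (heq : EqDDagger F φ) :
    ∀ x : Fin 7 → ℝ, ∀ ξ : Fin 7 → ℝ, ξ ≠ 0 →
      0 < B7 φ x * ((ξ 0) ^ 2 + (ξ 1) ^ 2 + (ξ 2) ^ 2 + (ξ 3) ^ 2)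
          + A7 φ x * ((ξ 4) ^ 2 + (ξ 5) ^ 2 + (ξ 6) ^ 2)
          - 2 * a₁7 φ x * (ξ 3 * ξ 4 - ξ 0 * ξ 5 - ξ 1 * ξ 6)
          - 2 * a₂7 φ x * (ξ 2 * ξ 4 + ξ 0 * ξ 6 - ξ 1 * ξ 5)
          - 2 * a₃7 φ x * (ξ 2 * ξ 5 + ξ 3 * ξ 6 + ξ 1 * ξ 4)
          - 2 * a₄7 φ x * (ξ 3 * ξ 5 - ξ 2 * ξ 6 + ξ 0 * ξ 4) := by
  intro x ξ hξ
  have hAB : ∀ y, 0 < A7 φ y * B7 φ y := fun y => by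
    have := heq y
    linarith [Real.exp_pos (F y), sq_nonneg (a₁7 φ y), sq_nonneg (a₂7 φ y),
      sq_nonneg (a₃7 φ y), sq_nonneg (a₄7 φ y)]
  obtain ⟨x₀, hmin⟩ := hφper.exists_forall_le hφ.continuous
  have hA₀ : 0 < A7 φ x₀ := by
    have hpd2 := pd2_self_nonneg_of_isLocalMin hφ (Eventually.of_forall hmin)
    simp only [A7]
    linarith [hpd2 0, hpd2 1, hpd2 2, hpd2 3]
  have hA : 0 < A7 φ x :=
    pos_of_forall_ne_zero (continuous_A7 hφ) (fun y => left_ne_zero_of_mul (hAB y).ne') hA₀ x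
  exact quaternionicForm_pos (pos_of_mul_pos_right (hAB x) hA.le) (heq x ▸ Real.exp_pos _) hξ

/-- Ellipticity of equation (‡) at any solution. -/
theorem ellipticity_of_eqDDagger
    (F φ : (Fin 7 → ℝ) → ℝ) (hF : Continuous F) (hFper : PeriodicPi F)
    (hφ : ContDiff ℝ 2 φ) (hφper : PeriodicPi φ) (heq : EqDDagger F φ) :
    ∀ x : Fin 7 → ℝ, ∀ ξ : Fin 7 → ℝ, ξ ≠ 0 →
      0 < B7 φ x * ((ξ 0) ^ 2 + (ξ 1) ^ 2 + (ξ 2) ^ 2 + (ξ 3) ^ 2)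
          + A7 φ x * ((ξ 4) ^ 2 + (ξ 5) ^ 2 + (ξ 6) ^ 2)
          - 2 * a₁7 φ x * (ξ 3 * ξ 4 - ξ 0 * ξ 5 - ξ 1 * ξ 6)
          - 2 * a₂7 φ x * (ξ 2 * ξ 4 + ξ 0 * ξ 6 - ξ 1 * ξ 5)
          - 2 * a₃7 φ x * (ξ 2 * ξ 5 + ξ 3 * ξ 6 + ξ 1 * ξ 4)
          - 2 * a₄7 φ x * (ξ 3 * ξ 5 - ξ 2 * ξ 6 + ξ 0 * ξ 4) :=
  ellipticity_of_eqDDagger_general F φ hφ hφper heq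
end
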